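/- arXiv:1706.09479 — 13 statements merged into one kernel-verified Lean document; each statement's English description precedes it below -/
import Mathlib

section
/- Let ι be a finite index type, D and K types, x y : ι → D databases, and a : D → K an attribute. If hammingDist x y ≤ k, then maxFreq (a ∘ y) ≤ maxFreq (a ∘ x) + k. (This is the base-table case of the paper's Lemma 1: the maximum frequency of any attribute value at distance k from the true database is at most the true maximum frequency plus k.) -/
/-- Maximum frequency of a value of `h` over a finite index type (0 if empty). -/
def maxFreq {ι K : Type*} [Fintype ι] [DecidableEq K] (h : ι → K) : ℕ :=
  Finset.univ.sup fun i => (Finset.univ.filter fun j => h j = h i).card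

theorem stmt0 {ι D K : Type*} [Fintype ι] [DecidableEq D] [DecidableEq K]
    (x y : ι → D) (a : D → K) (k : ℕ)
    (h : hammingDist x y ≤ k) :
    maxFreq (a ∘ y) ≤ maxFreq (a ∘ x) + k := by
  classical
  unfold maxFreq
  apply Finset.sup_le
  intro i _
  simp only [Function.comp_apply]
  set v := a (y i) with hv
  have hsub : (Finset.univ.filter fun j => a (y j) = v) ⊆
      (Finset.univ.filter fun j => a (x j) = v) ∪
      (Finset.univ.filter fun j => x j ≠ y j) := by
    intro j hj
    simp only [Finset.mem_filter, Finset.mem_union, Finset.mem_univ, true_and] at hj ⊢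
    by_cases hxy : x j = y j
    · left; rw [hxy]; exact hj
    · right; exact hxy
  have hham : (Finset.univ.filter fun j => x j ≠ y j).card = hammingDist x y := rfl
  have h1 : (Finset.univ.filter fun j => a (y j) = v).card ≤
      (Finset.univ.filter fun j => a (x j) = v).card + hammingDist x y := by
    calc _ ≤ ((Finset.univ.filter fun j => a (x j) = v) ∪
        (Finset.univ.filter fun j => x j ≠ y j)).card := Finset.card_le_card hsub
    _ ≤ _ := by rw [← hham]; exact Finset.card_union_le _ _
  have h2 : (Finset.univ.filter fun j => a (x j) = v).card ≤
      Finset.univ.sup fun i => (Finset.univ.filter fun j => a (x j) = a (x i)).card := by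
    rcases (Finset.univ.filter fun j => a (x j) = v).eq_empty_or_nonempty with he | ⟨j0, hj0⟩
    · simp [he]
    · simp only [Finset.mem_filter] at hj0
      calc (Finset.univ.filter fun j => a (x j) = v).card
          = (Finset.univ.filter fun j => a (x j) = a (x j0)).card := by
            simp only [Function.comp_apply, hj0.2]
        _ ≤ _ := Finset.le_sup (f := fun i =>
            (Finset.univ.filter fun j => a (x j) = a (x i)).card) (Finset.mem_univ j0)
  omega
end

section
/- Let ι be a finite nonempty index type, x : ι → D a database, and a : D → K an attribute. If maxFreq (a ∘ x) + k ≤ card ι, then there exists a database y : ι → D with hammingDist x y ≤ k and maxFreq (a ∘ y) = maxFreq (a ∘ x) + k. (This shows the bound of the paper's Lemma 1 base case is attained: one can modify k rows of the table to contain the most popular join key.) -/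
theorem stmt1 {ι D K : Type*} [Fintype ι] [Nonempty ι] [DecidableEq D] [DecidableEq K]
    (x : ι → D) (a : D → K) (k : ℕ)
    (h : maxFreq (a ∘ x) + k ≤ Fintype.card ι) :
    ∃ y : ι → D, hammingDist x y ≤ k ∧ maxFreq (a ∘ y) = maxFreq (a ∘ x) + k := by
  classical
  obtain ⟨i₀, -, hi₀⟩ := Finset.exists_mem_eq_sup Finset.univ Finset.univ_nonempty
    (fun i => (Finset.univ.filter fun j => (a ∘ x) j = (a ∘ x) i).card)
  set v := a (x i₀) with hv
  set S : Finset ι := Finset.univ.filter fun j => a (x j) = v with hS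
  have hmf : maxFreq (a ∘ x) = S.card := hi₀
  have hcS : S.card + k ≤ Fintype.card ι := hmf ▸ h
  have hkc : k ≤ Sᶜ.card := by
    rw [Finset.card_compl]
    omega
  obtain ⟨T, hTsub, hTcard⟩ := Finset.exists_subset_card_eq hkc
  have hdisj : Disjoint S T := by
    exact Finset.disjoint_left.mpr fun i hi hiT => (Finset.mem_compl.mp (hTsub hiT)) hi
  set y : ι → D := fun i => if i ∈ T then x i₀ else x i with hy
  have hi₀T : i₀ ∉ T := fun hh => (Finset.mem_compl.mp (hTsub hh)) (by simp [hS, hv])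
  have hyval : ∀ i, a (y i) = if i ∈ T then v else a (x i) := by
    intro i; by_cases hi : i ∈ T <;> simp [hy, hi, hv]
  have hfv : (Finset.univ.filter fun j => a (y j) = v) = S ∪ T := by
    ext j
    by_cases hj : j ∈ T
    · simp [hyval, hj]
    · simp [hyval, hj, hS]
  have hcard : (Finset.univ.filter fun j => a (y j) = v).card = S.card + k := by
    rw [hfv, Finset.card_union_of_disjoint hdisj, hTcard]
  refine ⟨y, ?_, ?_⟩
  · calc hammingDist x y ≤ T.card := by
          apply Finset.card_le_card
          intro i hi
          simp only [hammingDist, Finset.mem_filter, Finset.mem_univ, true_and] at hi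
          by_contra hiT
          exact hi (by simp [hy, hiT])
        _ = k := hTcard
  · rw [hmf]
    apply le_antisymm
    · apply Finset.sup_le
      intro i _
      by_cases hiv : a (y i) = v
      · have he : (Finset.univ.filter fun j => a (y j) = a (y i)) =
            (Finset.univ.filter fun j => a (y j) = v) :=
          Finset.filter_congr (fun j _ => by rw [hiv])
        calc (Finset.univ.filter fun j => a (y j) = a (y i)).card = S.card + k := by
              rw [he, hcard]
          _ ≤ S.card + k := le_rfl
      · have hiT : i ∉ T := fun hh => hiv (by simp [hyval, hh])
        have hsub : (Finset.univ.filter fun j => a (y j) = a (y i)) ⊆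
            (Finset.univ.filter fun j => a (x j) = a (x i)) := by
          intro j hj
          simp only [Finset.mem_filter, Finset.mem_univ, true_and] at hj ⊢
          have hjT : j ∉ T := fun hh => hiv (by rw [← hj]; simp [hyval, hh])
          rw [hyval j, hyval i, if_neg hjT, if_neg hiT] at hj
          exact hj
        calc (Finset.univ.filter fun j => a ((y) j) = a (y i)).card
            ≤ (Finset.univ.filter fun j => a (x j) = a (x i)).card :=
              Finset.card_le_card hsub
          _ ≤ maxFreq (a ∘ x) := Finset.le_sup (f := fun i => (Finset.univ.filter fun j => (a ∘ x) j = (a ∘ x) i).card) (Finset.mem_univ i)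
          _ ≤ S.card + k := by omega
    · have : (Finset.univ.filter fun j => a (y j) = a (y i₀)).card = S.card + k := by
        rw [show a (y i₀) = v by simp [hyval, hi₀T, hv], hcard]
      calc S.card + k = (Finset.univ.filter fun j => (a ∘ y) j = (a ∘ y) i₀).card :=
            this.symm
        _ ≤ maxFreq (a ∘ y) := Finset.le_sup (f := fun i => (Finset.univ.filter fun j => (a ∘ y) j = (a ∘ y) i).card) (Finset.mem_univ i₀)
end

section
/- Let M be a multiset over α, N a multiset over β, f : α → K and g : β → K key functions, and a : α → A an attribute of the left relation. Then the maximum frequency of the attribute (fun p => a p.1) in the equijoin J(M,N) is at most mf a M * mf g N; that is, for every value v : A, the number of pairs (with multiplicity) in J(M,N) whose left component has attribute value v is at most mf a M * mf g N. (This is the join case of the paper's Lemma 1: the worst case occurs when every row of M with the most popular value of a matches the most popular join key of N.) -/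
/-- Maximum frequency of a join key: the max over values of the multiplicity in `M.map f`. -/
def mf {α K : Type*} [DecidableEq K] (f : α → K) (M : Multiset α) : ℕ :=
  (M.map f).toFinset.sup fun v => (M.map f).count v

/-- Equijoin of two multisets on key functions `f` and `g`. -/
def equijoin {α β K : Type*} [DecidableEq K] (f : α → K) (g : β → K)
    (M : Multiset α) (N : Multiset β) : Multiset (α × β) :=
  M.bind fun a => (N.filter fun b => f a = g b).map (Prod.mk a)

lemma count_le_mf {α K : Type*} [DecidableEq K] (f : α → K) (M : Multiset α) (k : K) :
    (M.map f).count k ≤ mf f M := by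
  by_cases h : k ∈ (M.map f).toFinset
  · exact Finset.le_sup (f := fun v => (M.map f).count v) h
  · rw [Multiset.count_eq_zero_of_notMem (fun hm => h (Multiset.mem_toFinset.mpr hm))]
    exact Nat.zero_le _

theorem stmt2 {α β K A : Type*} [DecidableEq K] [DecidableEq A]
    (M : Multiset α) (N : Multiset β) (f : α → K) (g : β → K) (a : α → A) :
    ∀ v : A, ((equijoin f g M N).map fun p => a p.1).count v ≤ mf a M * mf g N := by
  intro v
  classical
  rw [equijoin, Multiset.map_bind, Multiset.count_bind]
  have hterm : ∀ x : α,
      (((N.filter fun b => f x = g b).map (Prod.mk x)).map fun p => a p.1).count v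
        ≤ (if v = a x then mf g N else 0) := by
    intro x
    rw [Multiset.map_map]
    have : ((fun p : α × β => a p.1) ∘ Prod.mk x) = fun _ => a x := rfl
    rw [this, Multiset.count_map]
    split_ifs with h
    · calc ((N.filter fun b => f x = g b).filter fun _ => v = a x).card
          ≤ (N.filter fun b => f x = g b).card := Multiset.card_le_card (Multiset.filter_le _ _)
        _ = (N.map g).count (f x) := by rw [Multiset.count_map]
        _ ≤ mf g N := count_le_mf g N (f x)
    · simp [Multiset.filter_eq_nil.mpr (fun b _ => h)]
  calc (M.map fun x => (((N.filter fun b => f x = g b).map (Prod.mk x)).map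
          fun p => a p.1).count v).sum
      ≤ (M.map fun x => if v = a x then mf g N else 0).sum := by
        apply Multiset.sum_map_le_sum_map
        intro x _
        exact hterm x
    _ = (M.map a).count v * mf g N := by
        rw [Multiset.count_map]
        induction M using Multiset.induction with
        | empty => simp
        | cons x s ih =>
          rw [Multiset.map_cons, Multiset.sum_cons, Multiset.filter_cons, ih]
          split_ifs with h
          · simp [Nat.add_mul, Nat.add_comm]
          · simp
    _ ≤ mf a M * mf g N := Nat.mul_le_mul_right _ (count_le_mf a M v)
end

section
/- Let ι₁, ι₂ be finite index types, x₁ y₁ : ι₁ → D₁ and x₂ y₂ : ι₂ → D₂ databases, f : D₁ → K and g : D₂ → K join keys, and a : D₁ → A an attribute. If hammingDist x₁ y₁ ≤ k₁ and hammingDist x₂ y₂ ≤ k₂, then for every value v : A, the number of pairs (i,j) with f (y₁ i) = g (y₂ j) and a (y₁ i) = v is at most (maxFreq (a ∘ x₁) + k₁) * (maxFreq (g ∘ x₂) + k₂). -/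
lemma count_le_maxFreq {ι K : Type*} [Fintype ι] [DecidableEq K] (h : ι → K) (c : K) :
    (Finset.univ.filter fun j => h j = c).card ≤ maxFreq h := by
  rcases (Finset.univ.filter fun j => h j = c).eq_empty_or_nonempty with he | ⟨j₀, hj₀⟩
  · simp [he]
  · simp only [Finset.mem_filter] at hj₀
    have : (Finset.univ.filter fun j => h j = c) =
        (Finset.univ.filter fun j => h j = h j₀) := by
      simp [hj₀.2]
    rw [this]
    exact Finset.le_sup (f := fun i => (Finset.univ.filter fun j => h j = h i).card) (Finset.mem_univ j₀)

lemma count_le_maxFreq_add {ι D K : Type*} [Fintype ι] [DecidableEq D] [DecidableEq K]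
    (x y : ι → D) (h : D → K) (c : K) (k : ℕ) (hk : hammingDist x y ≤ k) :
    (Finset.univ.filter fun j => h (y j) = c).card ≤ maxFreq (h ∘ x) + k := by
  classical
  have hsub : (Finset.univ.filter fun j => h (y j) = c) ⊆
      (Finset.univ.filter fun j => h (x j) = c) ∪ (Finset.univ.filter fun j => x j ≠ y j) := by
    intro j hj
    simp only [Finset.mem_filter, Finset.mem_union] at *
    by_cases hxy : x j = y j
    · left; exact ⟨Finset.mem_univ j, by rw [hxy]; exact hj.2⟩
    · right; exact ⟨Finset.mem_univ j, hxy⟩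
  calc (Finset.univ.filter fun j => h (y j) = c).card
      ≤ _ := Finset.card_le_card hsub
    _ ≤ (Finset.univ.filter fun j => h (x j) = c).card
        + (Finset.univ.filter fun j => x j ≠ y j).card := Finset.card_union_le _ _
    _ ≤ maxFreq (h ∘ x) + k := by
        refine Nat.add_le_add (count_le_maxFreq (h ∘ x) c) ?_
        exact le_trans (le_of_eq rfl) hk

theorem stmt3 {ι₁ ι₂ D₁ D₂ K A : Type*} [Fintype ι₁] [Fintype ι₂]
    [DecidableEq D₁] [DecidableEq D₂] [DecidableEq K] [DecidableEq A]
    (x₁ y₁ : ι₁ → D₁) (x₂ y₂ : ι₂ → D₂) (f : D₁ → K) (g : D₂ → K) (a : D₁ → A)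
    (k₁ k₂ : ℕ) (h₁ : hammingDist x₁ y₁ ≤ k₁) (h₂ : hammingDist x₂ y₂ ≤ k₂)
    (v : A) :
    (Finset.univ.filter fun ij : ι₁ × ι₂ =>
        f (y₁ ij.1) = g (y₂ ij.2) ∧ a (y₁ ij.1) = v).card
      ≤ (maxFreq (a ∘ x₁) + k₁) * (maxFreq (g ∘ x₂) + k₂) := by
  classical
  set S₁ := Finset.univ.filter fun i => a (y₁ i) = v with hS₁
  have hsub : (Finset.univ.filter fun ij : ι₁ × ι₂ =>
        f (y₁ ij.1) = g (y₂ ij.2) ∧ a (y₁ ij.1) = v)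
      ⊆ S₁.biUnion fun i => ({i} : Finset ι₁) ×ˢ
          (Finset.univ.filter fun j => g (y₂ j) = f (y₁ i)) := by
    intro ij hij
    simp only [Finset.mem_filter, Finset.mem_biUnion, Finset.mem_product,
      Finset.mem_singleton, hS₁, Finset.mem_univ, true_and] at *
    exact ⟨ij.1, hij.2, rfl, hij.1.symm⟩
  calc _ ≤ _ := Finset.card_le_card hsub
    _ ≤ ∑ i ∈ S₁, (({i} : Finset ι₁) ×ˢ
          (Finset.univ.filter fun j => g (y₂ j) = f (y₁ i))).card :=
        Finset.card_biUnion_le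
    _ ≤ ∑ i ∈ S₁, (maxFreq (g ∘ x₂) + k₂) := by
        refine Finset.sum_le_sum fun i _ => ?_
        rw [Finset.card_product, Finset.card_singleton, one_mul]
        exact count_le_maxFreq_add x₂ y₂ g (f (y₁ i)) k₂ h₂
    _ = S₁.card * (maxFreq (g ∘ x₂) + k₂) := by rw [Finset.sum_const, smul_eq_mul]
    _ ≤ (maxFreq (a ∘ x₁) + k₁) * (maxFreq (g ∘ x₂) + k₂) :=
        Nat.mul_le_mul_right _ (count_le_maxFreq_add x₁ y₁ a v k₁ h₁)
end

section
/- Let ι be a finite index type, x y : ι → D databases, G a finite type, and grp : D → G a grouping key. Then ∑ over g : G of the absolute difference between the number of indices i with grp (x i) = g and the number of indices i with grp (y i) = g is at most 2 * hammingDist x y. (This is the histogram case of the paper's Lemma 2 and Theorem 1: each changed row in the underlying relation can change at most two bins of the histogram produced by Count with grouping.) -/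
theorem stmt8 {ι D G : Type*} [Fintype ι] [DecidableEq D] [Fintype G] [DecidableEq G]
    (x y : ι → D) (grp : D → G) :
    ∑ g : G,
        |((Finset.univ.filter fun i => grp (x i) = g).card : ℤ)
          - ((Finset.univ.filter fun i => grp (y i) = g).card : ℤ)|
      ≤ 2 * (hammingDist x y : ℤ) := by
  classical
  have h1 : ∀ g : G, ((Finset.univ.filter fun i => grp (x i) = g).card : ℤ)
      - ((Finset.univ.filter fun i => grp (y i) = g).card : ℤ)
      = ∑ i : ι, (((if grp (x i) = g then 1 else 0) : ℤ)
          - ((if grp (y i) = g then 1 else 0) : ℤ)) := by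
    intro g
    rw [Finset.sum_sub_distrib, Finset.card_filter, Finset.card_filter]
    push_cast [apply_ite (Nat.cast : ℕ → ℤ)]
    rfl
  calc ∑ g : G,
        |((Finset.univ.filter fun i => grp (x i) = g).card : ℤ)
          - ((Finset.univ.filter fun i => grp (y i) = g).card : ℤ)|
      ≤ ∑ g : G, ∑ i : ι, |(((if grp (x i) = g then 1 else 0) : ℤ)
          - ((if grp (y i) = g then 1 else 0) : ℤ))| := by
        refine Finset.sum_le_sum fun g _ => ?_
        rw [h1 g]
        exact Finset.abs_sum_le_sum_abs _ _
    _ = ∑ i : ι, ∑ g : G, |(((if grp (x i) = g then 1 else 0) : ℤ)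
          - ((if grp (y i) = g then 1 else 0) : ℤ))| := Finset.sum_comm
    _ ≤ ∑ i : ι, (if x i = y i then 0 else 2 : ℤ) := by
        refine Finset.sum_le_sum fun i _ => ?_
        by_cases h : x i = y i
        · simp [h]
        · simp only [h, if_false]
          calc ∑ g : G, |(((if grp (x i) = g then 1 else 0) : ℤ)
                - ((if grp (y i) = g then 1 else 0) : ℤ))|
              ≤ ∑ g : G, (|((if grp (x i) = g then 1 else 0) : ℤ)|
                + |((if grp (y i) = g then 1 else 0) : ℤ)|) :=
                Finset.sum_le_sum fun g _ => abs_sub _ _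
            _ = 2 := by
                rw [Finset.sum_add_distrib]
                have : ∀ d : D, ∑ g : G, |((if grp d = g then 1 else 0) : ℤ)| = 1 := by
                  intro d
                  simp [apply_ite abs, Finset.sum_ite_eq]
                rw [this, this]; norm_num
    _ = 2 * (hammingDist x y : ℤ) := by
        rw [Finset.sum_ite, Finset.sum_const, Finset.sum_const]
        simp [hammingDist, Finset.filter_ne', mul_comm]
end

section
/- Let ι₁, ι₂ be finite index types, f : D₁ → K and g : D₂ → K join keys, and define the counting query q(u₁,u₂) = the number of index pairs (i,j) with f (u₁ i) = g (u₂ j). Let x₁, y₁, z₁ : ι₁ → D₁ and x₂, y₂, z₂ : ι₂ → D₂ with hammingDist x₁ y₁ + hammingDist x₂ y₂ ≤ k and hammingDist y₁ z₁ + hammingDist y₂ z₂ ≤ 1. Then |q(y₁,y₂) − q(z₁,z₂)| ≤ max (maxFreq (f ∘ x₁) + k) (maxFreq (g ∘ x₂) + k). (This instantiates the paper's Theorem 1 — elastic sensitivity upper-bounds local sensitivity at distance k — for a counting query over an equijoin of two distinct tables, where the elastic sensitivity at distance k is max(mf_k(a,r₁), mf_k(b,r₂)).) -/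
open Finset

lemma card_filter_le_maxFreq {ι K : Type*} [Fintype ι] [DecidableEq K] (h : ι → K) (v : K) :
    (univ.filter fun j => h j = v).card ≤ maxFreq h := by
  rcases (univ.filter fun j => h j = v).eq_empty_or_nonempty with he | ⟨i, hi⟩
  · simp [he]
  · simp only [mem_filter, mem_univ, true_and] at hi
    calc (univ.filter fun j => h j = v).card
        = (univ.filter fun j => h j = h i).card := by rw [hi]
      _ ≤ maxFreq h := by unfold maxFreq; exact le_sup (f := fun i => (univ.filter fun j => h j = h i).card) (mem_univ i)

lemma freq_bound {ι D K : Type*} [Fintype ι] [DecidableEq D] [DecidableEq K]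
    (h : D → K) (x y : ι → D) (v : K) :
    (univ.filter fun j => h (y j) = v).card ≤ maxFreq (h ∘ x) + hammingDist x y := by
  classical
  have hsub : (univ.filter fun j => h (y j) = v) ⊆
      (univ.filter fun j => h (x j) = v) ∪ (univ.filter fun j => x j ≠ y j) := by
    intro j hj
    simp only [mem_filter, mem_univ, true_and, mem_union] at *
    by_cases hxy : x j = y j
    · left; rw [hxy]; exact hj
    · right; exact hxy
  calc (univ.filter fun j => h (y j) = v).card
      ≤ ((univ.filter fun j => h (x j) = v) ∪ (univ.filter fun j => x j ≠ y j)).card :=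
        card_le_card hsub
    _ ≤ (univ.filter fun j => h (x j) = v).card + (univ.filter fun j => x j ≠ y j).card :=
        card_union_le _ _
    _ ≤ maxFreq (h ∘ x) + hammingDist x y := by
        refine add_le_add (card_filter_le_maxFreq (h ∘ x) v) ?_
        rw [hammingDist]

lemma abs_card_sub_le {α : Type*} [DecidableEq α] (A B : Finset α) {M : ℕ}
    (hA : (A \ B).card ≤ M) (hB : (B \ A).card ≤ M) :
    |(A.card : ℤ) - B.card| ≤ (M : ℤ) := by
  have h1 : (A ∩ B).card + (A \ B).card = A.card := card_inter_add_card_sdiff A B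
  have h2 : (B ∩ A).card + (B \ A).card = B.card := card_inter_add_card_sdiff B A
  have h3 : (A ∩ B).card = (B ∩ A).card := by rw [inter_comm]
  rw [abs_sub_le_iff]
  constructor <;> omega

lemma key1 {ι₁ ι₂ D₁ D₂ K : Type*} [Fintype ι₁] [Fintype ι₂]
    [DecidableEq D₁] [DecidableEq K]
    (f : D₁ → K) (g : D₂ → K)
    (y₁ z₁ : ι₁ → D₁) (u₂ : ι₂ → D₂)
    (hd : hammingDist y₁ z₁ ≤ 1) (M : ℕ)
    (hM : ∀ v, (univ.filter fun j => g (u₂ j) = v).card ≤ M) :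
    |((univ.filter fun ij : ι₁ × ι₂ => f (y₁ ij.1) = g (u₂ ij.2)).card : ℤ)
      - ((univ.filter fun ij : ι₁ × ι₂ => f (z₁ ij.1) = g (u₂ ij.2)).card : ℤ)| ≤ (M : ℤ) := by
  classical
  by_cases hyz : y₁ = z₁
  · subst hyz; simp
  · obtain ⟨i₀, hi₀⟩ := Function.ne_iff.mp hyz
    have hone : ∀ i, y₁ i ≠ z₁ i → i = i₀ := by
      intro i hi
      have h1 : i ∈ ({j | y₁ j ≠ z₁ j} : Finset ι₁) := by simp [hi]
      have h2 : i₀ ∈ ({j | y₁ j ≠ z₁ j} : Finset ι₁) := by simp [hi₀]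
      exact card_le_one.mp hd i h1 i₀ h2
    set A := univ.filter fun ij : ι₁ × ι₂ => f (y₁ ij.1) = g (u₂ ij.2) with hA
    set B := univ.filter fun ij : ι₁ × ι₂ => f (z₁ ij.1) = g (u₂ ij.2) with hB
    have hAB : A \ B ⊆ {i₀} ×ˢ (univ.filter fun j => g (u₂ j) = f (y₁ i₀)) := by
      intro ij hij
      simp only [hA, hB, mem_sdiff, mem_filter, mem_univ, true_and, mem_product,
        mem_singleton] at *
      have hne : y₁ ij.1 ≠ z₁ ij.1 := fun h => hij.2 (h ▸ hij.1)
      have h1 : ij.1 = i₀ := hone _ hne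
      exact ⟨h1, by rw [← hij.1, h1]⟩
    have hBA : B \ A ⊆ {i₀} ×ˢ (univ.filter fun j => g (u₂ j) = f (z₁ i₀)) := by
      intro ij hij
      simp only [hA, hB, mem_sdiff, mem_filter, mem_univ, true_and, mem_product,
        mem_singleton] at *
      have hne : y₁ ij.1 ≠ z₁ ij.1 := fun h => hij.2 (h ▸ hij.1)
      have h1 : ij.1 = i₀ := hone _ hne
      exact ⟨h1, by rw [← hij.1, h1]⟩
    refine abs_card_sub_le A B ?_ ?_
    · calc (A \ B).card ≤ _ := card_le_card hAB
        _ ≤ M := by rw [card_product, card_singleton, one_mul]; exact hM _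
    · calc (B \ A).card ≤ _ := card_le_card hBA
        _ ≤ M := by rw [card_product, card_singleton, one_mul]; exact hM _

lemma key2 {ι₁ ι₂ D₁ D₂ K : Type*} [Fintype ι₁] [Fintype ι₂]
    [DecidableEq D₂] [DecidableEq K]
    (f : D₁ → K) (g : D₂ → K)
    (u₁ : ι₁ → D₁) (y₂ z₂ : ι₂ → D₂)
    (hd : hammingDist y₂ z₂ ≤ 1) (M : ℕ)
    (hM : ∀ v, (univ.filter fun i => f (u₁ i) = v).card ≤ M) :
    |((univ.filter fun ij : ι₁ × ι₂ => f (u₁ ij.1) = g (y₂ ij.2)).card : ℤ)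
      - ((univ.filter fun ij : ι₁ × ι₂ => f (u₁ ij.1) = g (z₂ ij.2)).card : ℤ)| ≤ (M : ℤ) := by
  classical
  by_cases hyz : y₂ = z₂
  · subst hyz; simp
  · obtain ⟨j₀, hj₀⟩ := Function.ne_iff.mp hyz
    have hone : ∀ j, y₂ j ≠ z₂ j → j = j₀ := by
      intro j hj
      have h1 : j ∈ ({i | y₂ i ≠ z₂ i} : Finset ι₂) := by simp [hj]
      have h2 : j₀ ∈ ({i | y₂ i ≠ z₂ i} : Finset ι₂) := by simp [hj₀]
      exact card_le_one.mp hd j h1 j₀ h2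
    set A := univ.filter fun ij : ι₁ × ι₂ => f (u₁ ij.1) = g (y₂ ij.2) with hA
    set B := univ.filter fun ij : ι₁ × ι₂ => f (u₁ ij.1) = g (z₂ ij.2) with hB
    have hAB : A \ B ⊆ (univ.filter fun i => f (u₁ i) = g (y₂ j₀)) ×ˢ {j₀} := by
      intro ij hij
      simp only [hA, hB, mem_sdiff, mem_filter, mem_univ, true_and, mem_product,
        mem_singleton] at *
      have hne : y₂ ij.2 ≠ z₂ ij.2 := fun h => hij.2 (hij.1.trans (congrArg g h))
      have h1 : ij.2 = j₀ := hone _ hne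
      exact ⟨by rw [hij.1, h1], h1⟩
    have hBA : B \ A ⊆ (univ.filter fun i => f (u₁ i) = g (z₂ j₀)) ×ˢ {j₀} := by
      intro ij hij
      simp only [hA, hB, mem_sdiff, mem_filter, mem_univ, true_and, mem_product,
        mem_singleton] at *
      have hne : y₂ ij.2 ≠ z₂ ij.2 := fun h => hij.2 (hij.1.trans (congrArg g h).symm)
      have h1 : ij.2 = j₀ := hone _ hne
      exact ⟨by rw [hij.1, h1], h1⟩
    refine abs_card_sub_le A B ?_ ?_
    · calc (A \ B).card ≤ _ := card_le_card hAB
        _ ≤ M := by rw [card_product, card_singleton, mul_one]; exact hM _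
    · calc (B \ A).card ≤ _ := card_le_card hBA
        _ ≤ M := by rw [card_product, card_singleton, mul_one]; exact hM _

theorem stmt9 {ι₁ ι₂ D₁ D₂ K : Type*} [Fintype ι₁] [Fintype ι₂]
    [DecidableEq D₁] [DecidableEq D₂] [DecidableEq K]
    (f : D₁ → K) (g : D₂ → K) (k : ℕ)
    (x₁ y₁ z₁ : ι₁ → D₁) (x₂ y₂ z₂ : ι₂ → D₂)
    (hk : hammingDist x₁ y₁ + hammingDist x₂ y₂ ≤ k)
    (h1 : hammingDist y₁ z₁ + hammingDist y₂ z₂ ≤ 1) :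
    |((Finset.univ.filter fun ij : ι₁ × ι₂ => f (y₁ ij.1) = g (y₂ ij.2)).card : ℤ)
      - ((Finset.univ.filter fun ij : ι₁ × ι₂ => f (z₁ ij.1) = g (z₂ ij.2)).card : ℤ)|
      ≤ (max (maxFreq (f ∘ x₁) + k) (maxFreq (g ∘ x₂) + k) : ℤ) := by
  have hk1 : hammingDist x₁ y₁ ≤ k := by omega
  have hk2 : hammingDist x₂ y₂ ≤ k := by omega
  rcases Nat.eq_zero_or_pos (hammingDist y₂ z₂) with h20 | h2p
  · have hy2 : y₂ = z₂ := hammingDist_eq_zero.mp h20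
    subst hy2
    have hd1 : hammingDist y₁ z₁ ≤ 1 := by omega
    have hle := key1 f g y₁ z₁ y₂ hd1 (maxFreq (g ∘ x₂) + k)
      (fun v => (freq_bound g x₂ y₂ v).trans (by omega))
    refine hle.trans ?_
    have : (maxFreq (g ∘ x₂) + k : ℕ) ≤ max (maxFreq (f ∘ x₁) + k) (maxFreq (g ∘ x₂) + k) :=
      le_max_right _ _
    exact_mod_cast this
  · have h10 : hammingDist y₁ z₁ = 0 := by omega
    have hy1 : y₁ = z₁ := hammingDist_eq_zero.mp h10
    subst hy1
    have hd2 : hammingDist y₂ z₂ ≤ 1 := by omega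
    have hle := key2 f g y₁ y₂ z₂ hd2 (maxFreq (f ∘ x₁) + k)
      (fun v => (freq_bound f x₁ y₁ v).trans (by omega))
    refine hle.trans ?_
    have : (maxFreq (f ∘ x₁) + k : ℕ) ≤ max (maxFreq (f ∘ x₁) + k) (maxFreq (g ∘ x₂) + k) :=
      le_max_left _ _
    exact_mod_cast this
end

section
/- Let ι be a finite index type, f g : D → K join keys, and define the self-join counting query q(u) = the number of index pairs (i,j) with f (u i) = g (u j). Let x, y, z : ι → D with hammingDist x y ≤ k and hammingDist y z ≤ 1. Then |q(y) − q(z)| ≤ (maxFreq (f ∘ x) + k) + (maxFreq (g ∘ x) + k) + 1. (This instantiates the paper's Theorem 1 for a counting query over a self-equijoin of a single table, where the elastic sensitivity at distance k is mf_k(a,t) + mf_k(b,t) + 1.) -/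
lemma cnt_le_maxFreq {ι K : Type*} [Fintype ι] [DecidableEq K] (h : ι → K) (v : K) :
    (Finset.univ.filter fun j => h j = v).card ≤ maxFreq h := by
  classical
  rcases (Finset.univ.filter fun j => h j = v).eq_empty_or_nonempty with he | ⟨i, hi⟩
  · simp [he]
  · simp only [Finset.mem_filter, Finset.mem_univ, true_and] at hi
    have : (Finset.univ.filter fun j => h j = v)
        = (Finset.univ.filter fun j => h j = h i) := by rw [hi]
    rw [this]
    exact Finset.le_sup (f := fun i => (Finset.univ.filter fun j => h j = h i).card)
      (Finset.mem_univ i)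

lemma cnt_le {ι D K : Type*} [Fintype ι] [DecidableEq D] [DecidableEq K]
    (f : D → K) (x y : ι → D) (v : K) :
    (Finset.univ.filter fun j => f (y j) = v).card ≤ maxFreq (f ∘ x) + hammingDist x y := by
  classical
  have hsub : (Finset.univ.filter fun j => f (y j) = v) ⊆
      (Finset.univ.filter fun j => (f ∘ x) j = v) ∪ (Finset.univ.filter fun j => x j ≠ y j) := by
    intro j hj
    simp only [Finset.mem_filter, Finset.mem_union, Finset.mem_univ, true_and,
      Function.comp] at *
    by_cases h : x j = y j
    · left; rw [h]; exact hj
    · right; exact h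
  calc (Finset.univ.filter fun j => f (y j) = v).card
      ≤ _ := Finset.card_le_card hsub
    _ ≤ _ + _ := Finset.card_union_le _ _
    _ ≤ maxFreq (f ∘ x) + hammingDist x y := by
        exact Nat.add_le_add (cnt_le_maxFreq _ v) le_rfl

theorem stmt10 {ι D K : Type*} [Fintype ι] [DecidableEq D] [DecidableEq K]
    (f g : D → K) (k : ℕ) (x y z : ι → D)
    (hk : hammingDist x y ≤ k) (h1 : hammingDist y z ≤ 1) :
    |((Finset.univ.filter fun ij : ι × ι => f (y ij.1) = g (y ij.2)).card : ℤ)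
      - ((Finset.univ.filter fun ij : ι × ι => f (z ij.1) = g (z ij.2)).card : ℤ)|
      ≤ ((maxFreq (f ∘ x) + k) + (maxFreq (g ∘ x) + k) + 1 : ℤ) := by
  classical
  set A := Finset.univ.filter fun ij : ι × ι => f (y ij.1) = g (y ij.2) with hA
  set B := Finset.univ.filter fun ij : ι × ι => f (z ij.1) = g (z ij.2) with hB
  rcases Nat.le_one_iff_eq_zero_or_eq_one.mp h1 with hd | hd
  · -- y = z
    have : y = z := hammingDist_eq_zero.mp hd
    subst this
    simp
    simp only [hA, hB, sub_self, abs_zero]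
    positivity
  · -- differ at exactly one index
    obtain ⟨i₀, hi₀⟩ := Finset.card_eq_one.mp hd
    have heq : ∀ j, j ≠ i₀ → y j = z j := by
      intro j hj
      by_contra hne
      have : j ∈ ({i | y i ≠ z i} : Finset ι) := by
        simp [hne]
      rw [hi₀] at this
      exact hj (Finset.mem_singleton.mp this)
    have hxz : hammingDist x z ≤ k + 1 := by
      calc hammingDist x z ≤ hammingDist x y + hammingDist y z := hammingDist_triangle x y z
        _ ≤ k + 1 := by omega
    -- bound A \ B
    have hAB : A \ B ⊆ ({i₀} ×ˢ (Finset.univ.filter fun j => g (y j) = f (y i₀)))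
        ∪ ((Finset.univ.filter fun i => f (y i) = g (y i₀)) ×ˢ {i₀}) := by
      intro ij hij
      simp only [Finset.mem_sdiff, hA, hB, Finset.mem_filter, Finset.mem_univ, true_and,
        Finset.mem_union, Finset.mem_product, Finset.mem_singleton] at *
      obtain ⟨hy, hz⟩ := hij
      by_cases h1 : ij.1 = i₀
      · left; exact ⟨h1, by rw [← h1]; exact hy.symm⟩
      · by_cases h2 : ij.2 = i₀
        · right; exact ⟨by rw [← h2]; exact hy, h2⟩
        · exfalso; exact hz (by rw [← heq _ h1, ← heq _ h2]; exact hy)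
    have hABcard : (A \ B).card ≤ (maxFreq (g ∘ x) + k) + (maxFreq (f ∘ x) + k) := by
      calc (A \ B).card ≤ _ := Finset.card_le_card hAB
        _ ≤ _ + _ := Finset.card_union_le _ _
        _ ≤ (maxFreq (g ∘ x) + k) + (maxFreq (f ∘ x) + k) := by
            rw [Finset.card_product, Finset.card_product, Finset.card_singleton,
              one_mul, mul_one]
            have h1 := (cnt_le g x y (f (y i₀))).trans (Nat.add_le_add_left hk _)
            have h2 := (cnt_le f x y (g (y i₀))).trans (Nat.add_le_add_left hk _)
            omega
    -- bound B \ A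
    have hBA : B \ A ⊆ ({i₀} ×ˢ (Finset.univ.filter fun j => g (z j) = f (z i₀)))
        ∪ (((Finset.univ.filter fun i => f (z i) = g (z i₀)).erase i₀) ×ˢ {i₀}) := by
      intro ij hij
      simp only [Finset.mem_sdiff, hA, hB, Finset.mem_filter, Finset.mem_univ, true_and,
        Finset.mem_union, Finset.mem_product, Finset.mem_singleton, Finset.mem_erase] at *
      obtain ⟨hz, hy⟩ := hij
      by_cases h1 : ij.1 = i₀
      · left; exact ⟨h1, by rw [← h1]; exact hz.symm⟩
      · by_cases h2 : ij.2 = i₀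
        · right; exact ⟨⟨h1, by rw [← h2]; exact hz⟩, h2⟩
        · exfalso; exact hy (by rw [heq _ h1, heq _ h2]; exact hz)
    have hBAcard : (B \ A).card ≤ (maxFreq (g ∘ x) + (k + 1)) + (maxFreq (f ∘ x) + k) := by
      calc (B \ A).card ≤ _ := Finset.card_le_card hBA
        _ ≤ _ + _ := Finset.card_union_le _ _
        _ ≤ (maxFreq (g ∘ x) + (k + 1)) + (maxFreq (f ∘ x) + k) := by
            rw [Finset.card_product, Finset.card_product, Finset.card_singleton,
              one_mul, mul_one]
            have h1 := (cnt_le g x z (f (z i₀))).trans (Nat.add_le_add_left hxz _)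
            have h2 : ((Finset.univ.filter fun i => f (z i) = g (z i₀)).erase i₀).card
                ≤ maxFreq (f ∘ x) + k := by
              have hsub : ((Finset.univ.filter fun i => f (z i) = g (z i₀)).erase i₀)
                  ⊆ Finset.univ.filter fun i => f (y i) = g (z i₀) := by
                intro i hi
                simp only [Finset.mem_erase, Finset.mem_filter, Finset.mem_univ,
                  true_and] at *
                rw [heq _ hi.1]; exact hi.2
              exact (Finset.card_le_card hsub).trans
                ((cnt_le f x y (g (z i₀))).trans (Nat.add_le_add_left hk _))
            omega
    have c1 : A.card ≤ (A \ B).card + B.card := Finset.card_le_card_sdiff_add_card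
    have c2 : B.card ≤ (B \ A).card + A.card := Finset.card_le_card_sdiff_add_card
    rw [abs_sub_le_iff]
    constructor <;> push_cast <;> omega
end

section
/- Let ι be a finite index type of cardinality n, f : (ι → D) → ℝ a query, x : ι → D the true database, β ≥ 0, and Ŝ : ℕ → ℝ a function such that for all k and all databases y, z with hammingDist x y ≤ k and hammingDist y z ≤ 1 one has |f y − f z| ≤ Ŝ k (i.e., Ŝ k upper-bounds the local sensitivity of f at distance k from x). Then for all databases y, z with hammingDist y z ≤ 1: |f y − f z| * Real.exp (−β * hammingDist x y) ≤ max over k ∈ {0,...,n} of Real.exp (−β * k) * Ŝ k. (This justifies step 2 of the FLEX mechanism: smoothing any upper bound on local sensitivity at distance k, such as elastic sensitivity, over k = 0,...,n yields an upper bound on the β-smooth sensitivity of f at x.) -/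
theorem stmt11 {ι D : Type*} [Fintype ι] [DecidableEq D]
    (f : (ι → D) → ℝ) (x : ι → D) (β : ℝ) (hβ : 0 ≤ β) (S : ℕ → ℝ)
    (hS : ∀ (k : ℕ) (y z : ι → D), hammingDist x y ≤ k → hammingDist y z ≤ 1 →
      |f y - f z| ≤ S k) :
    ∀ y z : ι → D, hammingDist y z ≤ 1 →
      |f y - f z| * Real.exp (-β * (hammingDist x y : ℝ))
        ≤ (Finset.range (Fintype.card ι + 1)).sup' Finset.nonempty_range_add_one
            (fun k => Real.exp (-β * (k : ℝ)) * S k) := by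
  intro y z hyz
  have hkmem : hammingDist x y ∈ Finset.range (Fintype.card ι + 1) :=
    Finset.mem_range.mpr (Nat.lt_succ_of_le hammingDist_le_card_fintype)
  calc |f y - f z| * Real.exp (-β * (hammingDist x y : ℝ))
      ≤ S (hammingDist x y) * Real.exp (-β * (hammingDist x y : ℝ)) :=
        mul_le_mul_of_nonneg_right (hS _ y z le_rfl hyz) (Real.exp_nonneg _)
    _ = Real.exp (-β * (hammingDist x y : ℝ)) * S (hammingDist x y) := mul_comm _ _
    _ ≤ _ := Finset.le_sup' (fun k : ℕ => Real.exp (-β * (k : ℝ)) * S k) hkmem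
end

section
/- Let ι and D be finite types with D nonempty, f : (ι → D) → ℝ a query, and β ≥ 0. Define the local sensitivity LS(y) = max over z with hammingDist y z ≤ 1 of |f y − f z|, and the smooth sensitivity S*(x) = max over all databases y of Real.exp (−β * hammingDist x y) * LS(y). Then (i) LS(x) ≤ S*(x) for every x, and (ii) for all x, x' with hammingDist x x' ≤ 1, S*(x) ≤ Real.exp β * S*(x'). (This is the β-smoothness property of the smooth upper bound on local sensitivity used by the FLEX mechanism, following Nissim et al.) -/
variable {ι D : Type*} [Fintype ι] [DecidableEq ι] [Fintype D] [DecidableEq D] [Nonempty D]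

/-- Local sensitivity of `f` at `y`: max of `|f y - f z|` over neighbors `z` of `y`. -/
noncomputable def localSens (f : (ι → D) → ℝ) (y : ι → D) : ℝ :=
  (Finset.univ.filter fun z : ι → D => hammingDist y z ≤ 1).sup'
    ⟨y, by simp [hammingDist_self]⟩ (fun z => |f y - f z|)

/-- β-smooth sensitivity of `f` at `x`. -/
noncomputable def smoothSens (β : ℝ) (f : (ι → D) → ℝ) (x : ι → D) : ℝ :=
  Finset.univ.sup' Finset.univ_nonempty
    (fun y : ι → D => Real.exp (-β * (hammingDist x y : ℝ)) * localSens f y)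

lemma localSens_nonneg (f : (ι → D) → ℝ) (y : ι → D) : 0 ≤ localSens f y := by
  have h : y ∈ Finset.univ.filter fun z : ι → D => hammingDist y z ≤ 1 := by
    simp [hammingDist_self]
  calc (0:ℝ) = |f y - f y| := by simp
    _ ≤ localSens f y := Finset.le_sup' (fun z => |f y - f z|) h

theorem stmt12 (f : (ι → D) → ℝ) (β : ℝ) (hβ : 0 ≤ β) :
    (∀ x : ι → D, localSens f x ≤ smoothSens β f x) ∧
    (∀ x x' : ι → D, hammingDist x x' ≤ 1 →
      smoothSens β f x ≤ Real.exp β * smoothSens β f x') := by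
  constructor
  · intro x
    have := Finset.le_sup' (b := x) (s := (Finset.univ : Finset (ι → D)))
      (fun y : ι → D => Real.exp (-β * (hammingDist x y : ℝ)) * localSens f y)
      (Finset.mem_univ x)
    simp [smoothSens, hammingDist_self]
    exact ⟨x, by simp [hammingDist_self]⟩
  · intro x x' hxx'
    unfold smoothSens
    rw [Finset.sup'_le_iff]
    intro y _
    have hd : (hammingDist x' y : ℝ) ≤ hammingDist x y + 1 := by
      have := hammingDist_triangle x' x y
      have : hammingDist x' y ≤ hammingDist x y + 1 := by
        calc hammingDist x' y ≤ hammingDist x' x + hammingDist x y := hammingDist_triangle _ _ _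
          _ ≤ 1 + hammingDist x y := by
              exact Nat.add_le_add_right (by rwa [hammingDist_comm]) _
          _ = hammingDist x y + 1 := Nat.add_comm _ _
      exact_mod_cast this
    have hexp : Real.exp (-β * (hammingDist x y : ℝ)) ≤
        Real.exp β * Real.exp (-β * (hammingDist x' y : ℝ)) := by
      rw [← Real.exp_add]
      apply Real.exp_le_exp.2
      nlinarith [hd, hβ]
    calc Real.exp (-β * (hammingDist x y : ℝ)) * localSens f y
        ≤ (Real.exp β * Real.exp (-β * (hammingDist x' y : ℝ))) * localSens f y :=
          mul_le_mul_of_nonneg_right hexp (localSens_nonneg f y)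
      _ = Real.exp β * (Real.exp (-β * (hammingDist x' y : ℝ)) * localSens f y) := by ring
      _ ≤ Real.exp β * Finset.univ.sup' Finset.univ_nonempty
            (fun y : ι → D => Real.exp (-β * (hammingDist x' y : ℝ)) * localSens f y) := by
          exact mul_le_mul_of_nonneg_left
            (Finset.le_sup' (fun y : ι → D => Real.exp (-β * (hammingDist x' y : ℝ)) * localSens f y)
              (Finset.mem_univ y)) (Real.exp_nonneg β)
end

section
/- Let b > 0, μ₁, μ₂ : ℝ, and A ⊆ ℝ a measurable set. Then ∫ z in A, (1/(2*b)) * Real.exp (−|z − μ₁| / b) dz ≤ Real.exp (|μ₁ − μ₂| / b) * ∫ z in A, (1/(2*b)) * Real.exp (−|z − μ₂| / b) dz (integrals with respect to Lebesgue measure). (This is the ε-indistinguishability of the Laplace mechanism's output distributions when the true answers are μ₁ and μ₂: the probability of any output set changes by a factor of at most exp(|μ₁ − μ₂|/b).) -/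
open MeasureTheory Set Real

lemma lap_int (b : ℝ) (hb : 0 < b) (μ : ℝ) :
    Integrable (fun z : ℝ => Real.exp (-|z - μ| / b)) := by
  have h0 : Integrable (fun x : ℝ => Real.exp (-|x| / b)) := by
    have h1 : IntegrableOn (fun x : ℝ => Real.exp (-|x| / b)) (Ioi 0) := by
      refine ((exp_neg_integrableOn_Ioi 0 (by positivity : (0:ℝ) < 1/b))).congr_fun
        (fun x hx => ?_) measurableSet_Ioi
      rw [abs_of_pos hx]; ring_nf
    have h2 : IntegrableOn (fun x : ℝ => Real.exp (-|x| / b)) (Iio 0) := by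
      have hmp : MeasurePreserving (fun x : ℝ => -x) volume volume :=
        Measure.measurePreserving_neg volume
      have := (hmp.integrableOn_comp_preimage (Homeomorph.neg ℝ).measurableEmbedding
        (s := Ioi (0:ℝ))).mpr h1
      have hpre : (fun x : ℝ => -x) ⁻¹' Ioi 0 = Iio 0 := by ext x; simp
      rw [hpre] at this
      exact this.congr_fun (fun x _ => by simp) measurableSet_Iio
    have h3 := h2.union (Iff.mpr integrableOn_Ici_iff_integrableOn_Ioi h1)
    rw [Iio_union_Ici] at h3
    exact integrableOn_univ.mp h3
  simpa [sub_eq_add_neg] using h0.comp_add_right (-μ)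

theorem stmt14 (b : ℝ) (hb : 0 < b) (μ₁ μ₂ : ℝ) (A : Set ℝ) (hA : MeasurableSet A) :
    ∫ z in A, (1 / (2 * b)) * Real.exp (-|z - μ₁| / b)
      ≤ Real.exp (|μ₁ - μ₂| / b) * ∫ z in A, (1 / (2 * b)) * Real.exp (-|z - μ₂| / b) := by
  rw [← integral_const_mul]
  apply setIntegral_mono_on
  · exact ((lap_int b hb μ₁).const_mul _).integrableOn
  · exact (((lap_int b hb μ₂).const_mul _).const_mul _).integrableOn
  · exact hA
  · intro z _
    rw [← mul_assoc, mul_comm (Real.exp _) _, mul_assoc]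
    apply mul_le_mul_of_nonneg_left _ (by positivity)
    rw [← Real.exp_add]
    apply Real.exp_le_exp.mpr
    rw [← add_div]
    gcongr
    have : |z - μ₁| ≥ |z - μ₂| - |μ₁ - μ₂| := by
      have := abs_sub_abs_le_abs_sub (z - μ₂) (z - μ₁)
      have h2 : (z - μ₂) - (z - μ₁) = μ₁ - μ₂ := by ring
      rw [h2] at this; linarith
    linarith
end

section
/- Let P : Polynomial ℝ have all coefficients nonnegative (∀ i, 0 ≤ P.coeff i) and let β > 0. Then the function S(t) = Real.exp (−β * t) * P.eval t is antitone on the interval [P.natDegree / β, ∞): for all real s, t with P.natDegree / β ≤ s ≤ t, one has S(t) ≤ S(s). (This is the key analytic fact behind the paper's theorem on efficiently calculating smoothed elastic sensitivity: since elastic sensitivity at distance k is a polynomial in k with nonnegative coefficients, the smoothed value e^{−βk}·Ŝ^{(k)} is nonincreasing once k exceeds degree/β.) -/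
lemma aux_mono (i : ℕ) (β s t : ℝ) (hβ : 0 < β) (hi : (i : ℝ) ≤ β * s)
    (hs0 : 0 ≤ s) (hst : s ≤ t) :
    Real.exp (-β * t) * t ^ i ≤ Real.exp (-β * s) * s ^ i := by
  rcases eq_or_lt_of_le hs0 with h0 | hspos
  · -- s = 0, so i = 0
    have hi0 : i = 0 := by
      have : (i : ℝ) ≤ 0 := by rw [← h0] at hi; simpa using hi
      exact_mod_cast le_antisymm (by exact_mod_cast this) (Nat.zero_le i)
    subst hi0
    simp only [pow_zero, mul_one]
    apply Real.exp_le_exp.mpr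
    nlinarith
  · have ht : 0 < t := lt_of_lt_of_le hspos hst
    set r : ℝ := (t - s) / s with hr
    have hr0 : 0 ≤ r := div_nonneg (by linarith) hspos.le
    have htr : t = s * (1 + r) := by rw [hr]; field_simp; ring
    have h1 : (1 + r) ≤ Real.exp r := by
      have := Real.add_one_le_exp r; linarith
    have h2 : (1 + r) ^ i ≤ Real.exp r ^ i :=
      pow_le_pow_left₀ (by linarith) h1 i
    have h3 : Real.exp r ^ i = Real.exp (r * i) := by
      rw [← Real.exp_nat_mul]; ring_nf
    have h4 : r * i ≤ β * (t - s) := by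
      have : (i : ℝ) / s ≤ β := (div_le_iff₀ hspos).mpr (by linarith [hi])
      have h5 : r * i = (i : ℝ) / s * (t - s) := by rw [hr]; field_simp
      rw [h5]
      exact mul_le_mul_of_nonneg_right this (by linarith)
    have h6 : t ^ i ≤ Real.exp (β * (t - s)) * s ^ i := by
      conv_lhs => rw [htr, mul_pow]
      calc s ^ i * (1 + r) ^ i ≤ s ^ i * Real.exp (r * i) := by
            apply mul_le_mul_of_nonneg_left _ (pow_nonneg hspos.le i)
            rw [← h3]; exact h2
        _ ≤ Real.exp (β * (t - s)) * s ^ i := by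
            rw [mul_comm]
            exact mul_le_mul_of_nonneg_right (Real.exp_le_exp.mpr h4)
              (pow_nonneg hspos.le i)
    calc Real.exp (-β * t) * t ^ i
        ≤ Real.exp (-β * t) * (Real.exp (β * (t - s)) * s ^ i) :=
          mul_le_mul_of_nonneg_left h6 (Real.exp_pos _).le
      _ = Real.exp (-β * s) * s ^ i := by
          rw [← mul_assoc, ← Real.exp_add]; ring_nf

theorem stmt15 (P : Polynomial ℝ) (hP : ∀ i, 0 ≤ P.coeff i) (β : ℝ) (hβ : 0 < β)
    (s t : ℝ) (hs : (P.natDegree : ℝ) / β ≤ s) (hst : s ≤ t) :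
    Real.exp (-β * t) * P.eval t ≤ Real.exp (-β * s) * P.eval s := by
  have hs0 : 0 ≤ s := le_trans (div_nonneg (Nat.cast_nonneg _) hβ.le) hs
  have hdeg : (P.natDegree : ℝ) ≤ β * s := (div_le_iff₀' hβ).mp hs
  rw [Polynomial.eval_eq_sum_range, Polynomial.eval_eq_sum_range, Finset.mul_sum,
    Finset.mul_sum]
  apply Finset.sum_le_sum
  intro i hi
  have hiβ : (i : ℝ) ≤ β * s := by
    have : i ≤ P.natDegree := Nat.lt_succ_iff.mp (Finset.mem_range.mp hi)
    exact le_trans (by exact_mod_cast this) hdeg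
  have := aux_mono i β s t hβ hiβ hs0 hst
  calc Real.exp (-β * t) * (P.coeff i * t ^ i)
      = P.coeff i * (Real.exp (-β * t) * t ^ i) := by ring
    _ ≤ P.coeff i * (Real.exp (-β * s) * s ^ i) :=
        mul_le_mul_of_nonneg_left this (hP i)
    _ = Real.exp (-β * s) * (P.coeff i * s ^ i) := by ring
end

section
/- Let P : Polynomial ℝ have all coefficients nonnegative (∀ i, 0 ≤ P.coeff i), let β > 0, and let m, n : ℕ with (P.natDegree : ℝ) / β ≤ m and m ≤ n. Then max over k ∈ {0,...,n} of Real.exp (−β * k) * P.eval k equals max over k ∈ {0,...,m} of Real.exp (−β * k) * P.eval k. (This is the paper's theorem on efficiently calculating the smoothed elastic sensitivity: to maximize S(k) = e^{−βk}·Ŝ^{(k)}(q,x) over k = 0,...,n, it suffices to maximize over k = 0,...,m for any m ≥ degree/β, yielding significant computational savings since m depends only on the query and not the database size.) -/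
lemma stmt16_step (P : Polynomial ℝ) (hP : ∀ i, 0 ≤ P.coeff i) (β : ℝ) (hβ : 0 < β)
    (k : ℕ) (hk : (P.natDegree : ℝ) / β ≤ k) :
    Real.exp (-β * ((k : ℝ) + 1)) * P.eval ((k : ℝ) + 1)
      ≤ Real.exp (-β * (k : ℝ)) * P.eval (k : ℝ) := by
  have hPk : 0 ≤ P.eval (k : ℝ) := by
    rw [Polynomial.eval_eq_sum_range]
    exact Finset.sum_nonneg fun i _ => mul_nonneg (hP i) (pow_nonneg (Nat.cast_nonneg k) i)
  have key : P.eval ((k : ℝ) + 1) ≤ Real.exp β * P.eval (k : ℝ) := by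
    rcases Nat.eq_zero_or_pos P.natDegree with hd | hd
    · rw [Polynomial.eval_eq_sum_range, Polynomial.eval_eq_sum_range, hd]
      simp only [zero_add, Finset.range_one, Finset.sum_singleton, pow_zero, mul_one]
      nlinarith [Real.add_one_le_exp β, hP 0]
    · have hk0 : (0 : ℝ) < k := lt_of_lt_of_le (div_pos (by exact_mod_cast hd) hβ) hk
      have hd_le : (P.natDegree : ℝ) ≤ β * k := by
        rw [div_le_iff₀ hβ] at hk; linarith
      rw [Polynomial.eval_eq_sum_range, Polynomial.eval_eq_sum_range]
      have hterm : ∀ i ∈ Finset.range (P.natDegree + 1),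
          P.coeff i * ((k : ℝ) + 1) ^ i ≤ Real.exp β * (P.coeff i * (k : ℝ) ^ i) := by
        intro i hi
        have hi' : i ≤ P.natDegree := Nat.lt_succ_iff.mp (Finset.mem_range.mp hi)
        have hinv : (k : ℝ) * (1 / k) = 1 := mul_one_div_cancel (ne_of_gt hk0)
        have h1 : ((k : ℝ) + 1) ≤ (k : ℝ) * Real.exp (1 / k) := by
          have h := Real.add_one_le_exp (1 / (k : ℝ))
          nlinarith
        have h2 : ((k : ℝ) + 1) ^ i ≤ ((k : ℝ) * Real.exp (1 / k)) ^ i :=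
          pow_le_pow_left₀ (by positivity) h1 i
        have h3 : ((k : ℝ) * Real.exp (1 / k)) ^ i = (k : ℝ) ^ i * Real.exp ((i : ℝ) / k) := by
          rw [mul_pow, ← Real.exp_nat_mul]
          congr 1
          field_simp
        have h4 : Real.exp ((i : ℝ) / k) ≤ Real.exp β := by
          apply Real.exp_le_exp.mpr
          rw [div_le_iff₀ hk0]
          calc ((i : ℝ)) ≤ P.natDegree := by exact_mod_cast hi'
            _ ≤ β * k := hd_le
        have h5 : ((k : ℝ) + 1) ^ i ≤ (k : ℝ) ^ i * Real.exp β := by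
          calc ((k : ℝ) + 1) ^ i ≤ (k : ℝ) ^ i * Real.exp ((i : ℝ) / k) := h3 ▸ h2
            _ ≤ (k : ℝ) ^ i * Real.exp β := by
                exact mul_le_mul_of_nonneg_left h4 (by positivity)
        calc P.coeff i * ((k : ℝ) + 1) ^ i ≤ P.coeff i * ((k : ℝ) ^ i * Real.exp β) :=
              mul_le_mul_of_nonneg_left h5 (hP i)
          _ = Real.exp β * (P.coeff i * (k : ℝ) ^ i) := by ring
      calc (∑ i ∈ Finset.range (P.natDegree + 1), P.coeff i * ((k : ℝ) + 1) ^ i)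
          ≤ ∑ i ∈ Finset.range (P.natDegree + 1), Real.exp β * (P.coeff i * (k : ℝ) ^ i) :=
            Finset.sum_le_sum hterm
        _ = Real.exp β * ∑ i ∈ Finset.range (P.natDegree + 1), P.coeff i * (k : ℝ) ^ i := by
            rw [Finset.mul_sum]
  calc Real.exp (-β * ((k : ℝ) + 1)) * P.eval ((k : ℝ) + 1)
      ≤ Real.exp (-β * ((k : ℝ) + 1)) * (Real.exp β * P.eval (k : ℝ)) :=
        mul_le_mul_of_nonneg_left key (Real.exp_pos _).le
    _ = Real.exp (-β * (k : ℝ)) * P.eval (k : ℝ) := by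
        rw [← mul_assoc, ← Real.exp_add]; ring_nf

theorem stmt16 (P : Polynomial ℝ) (hP : ∀ i, 0 ≤ P.coeff i) (β : ℝ) (hβ : 0 < β)
    (m n : ℕ) (hm : (P.natDegree : ℝ) / β ≤ m) (hmn : m ≤ n) :
    (Finset.range (n + 1)).sup' Finset.nonempty_range_add_one
        (fun k => Real.exp (-β * (k : ℝ)) * P.eval (k : ℝ))
      = (Finset.range (m + 1)).sup' Finset.nonempty_range_add_one
        (fun k => Real.exp (-β * (k : ℝ)) * P.eval (k : ℝ)) := by
  induction n, hmn using Nat.le_induction with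
  | base => rfl
  | succ n hn ih =>
    have hstep : Real.exp (-β * ((n : ℝ) + 1)) * P.eval ((n : ℝ) + 1)
        ≤ Real.exp (-β * (n : ℝ)) * P.eval (n : ℝ) := by
      apply stmt16_step P hP β hβ n
      exact le_trans hm (by exact_mod_cast hn)
    apply le_antisymm
    · apply Finset.sup'_le
      intro k hk
      rw [Finset.mem_range, Nat.lt_succ_iff] at hk
      rw [← ih]
      rcases eq_or_lt_of_le hk with rfl | hk'
      · have h2 : Real.exp (-β * (n : ℝ)) * P.eval (n : ℝ)
            ≤ (Finset.range (n + 1)).sup' Finset.nonempty_range_add_one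
              (fun k => Real.exp (-β * (k : ℝ)) * P.eval (k : ℝ)) :=
          Finset.le_sup' (fun k : ℕ => Real.exp (-β * (k : ℝ)) * P.eval (k : ℝ))
            (Finset.self_mem_range_succ n)
        calc Real.exp (-β * ((n + 1 : ℕ) : ℝ)) * P.eval ((n + 1 : ℕ) : ℝ)
            = Real.exp (-β * ((n : ℝ) + 1)) * P.eval ((n : ℝ) + 1) := by push_cast; ring_nf
          _ ≤ _ := le_trans hstep h2
      · exact Finset.le_sup' (fun k : ℕ => Real.exp (-β * (k : ℝ)) * P.eval (k : ℝ))
          (Finset.mem_range.mpr hk')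
    · apply Finset.sup'_le
      intro k hk
      rw [Finset.mem_range] at hk
      exact Finset.le_sup' (fun k : ℕ => Real.exp (-β * (k : ℝ)) * P.eval (k : ℝ))
        (Finset.mem_range.mpr (by omega))
end

section
/- Let X be a finite set over α, Y a finite set over β, and f : α → K, g : β → K key functions such that f is injective on X and g is injective on Y (the join is one-to-one). Then the number of pairs (x, y) ∈ X × Y with f x = g y equals the cardinality of (X.image f) ∩ (Y.image g). (This is the paper's claim that DJoin's rewriting of a counting query over a join as the cardinality of the intersection of the projected key sets |π_A(X) ∩ π_B(Y)| is semantically equivalent to the original query exactly when the join is one-to-one.) -/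
theorem stmt17 {α β K : Type*} [DecidableEq α] [DecidableEq β] [DecidableEq K]
    (X : Finset α) (Y : Finset β) (f : α → K) (g : β → K)
    (hf : Set.InjOn f X) (hg : Set.InjOn g Y) :
    ((X ×ˢ Y).filter fun p => f p.1 = g p.2).card
      = ((X.image f) ∩ (Y.image g)).card := by
  apply Finset.card_bij (fun p _ => f p.1)
  · intro p hp
    simp only [Finset.mem_filter, Finset.mem_product] at hp
    simp only [Finset.mem_inter, Finset.mem_image]
    exact ⟨⟨p.1, hp.1.1, rfl⟩, ⟨p.2, hp.1.2, hp.2.symm⟩⟩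
  · intro p hp q hq h
    simp only [Finset.mem_filter, Finset.mem_product] at hp hq
    have h1 := hf hp.1.1 hq.1.1 h
    have h2 := hg hp.1.2 hq.1.2 (by rw [← hp.2, ← hq.2, h])
    exact Prod.ext h1 h2
  · intro k hk
    simp only [Finset.mem_inter, Finset.mem_image] at hk
    obtain ⟨⟨x, hx, hfx⟩, ⟨y, hy, hgy⟩⟩ := hk
    exact ⟨(x, y), by simp [Finset.mem_filter, Finset.mem_product, hx, hy, hfx, hgy], hfx⟩
end
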